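/- Let p, u, v, g, z, h, r be real numbers. Define F : ℝ³ → Matrix 3 3 ℝ by F(y) = [[p, u, v − u·y₁ + p·y₂], [−u, p, g − p·y₁ − u·y₂], [z + u·y₁ + p·y₂, h − p·y₁ + u·y₂, r − (g+h)·y₁ + (v+z)·y₂ + p·(y₁² + y₂²)]], and let G(y) = (F(y) + F(y)ᵀ)/2 be its symmetric part. Then G(y) is invertible for every y ∈ ℝ³ if and only if p·(4·p·r − (g+h)² − (v+z)²) ≠ 0. -/
import Mathlib


open Matrix

/-- The tensor `F` of the sigma model on the Manin triple `(7₀|1)`. -/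
noncomputable def F701 (p u v g z h r : ℝ) (y : Fin 3 → ℝ) : Matrix (Fin 3) (Fin 3) ℝ :=
  !![p,                     u,                     v - u * y 0 + p * y 1;
     -u,                    p,                     g - p * y 0 - u * y 1;
     z + u * y 0 + p * y 1, h - p * y 0 + u * y 1,
       r - (g + h) * y 0 + (v + z) * y 1 + p * ((y 0) ^ 2 + (y 1) ^ 2)]

/-- The metric of the `(7₀|1)` sigma model is invertible everywhere iff
`p·(4·p·r − (g+h)² − (v+z)²) ≠ 0`. -/
theorem metric701_invertible_iff (p u v g z h r : ℝ) :
    (∀ y : Fin 3 → ℝ,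
        IsUnit ((1 / 2 : ℝ) • (F701 p u v g z h r y + (F701 p u v g z h r y)ᵀ))) ↔
      p * (4 * p * r - (g + h) ^ 2 - (v + z) ^ 2) ≠ 0 := by
  have hdet : ∀ y : Fin 3 → ℝ,
      ((1 / 2 : ℝ) • (F701 p u v g z h r y + (F701 p u v g z h r y)ᵀ)).det =
        p * (4 * p * r - (g + h) ^ 2 - (v + z) ^ 2) / 4 := by
    intro y
    have hG : (1 / 2 : ℝ) • (F701 p u v g z h r y + (F701 p u v g z h r y)ᵀ) =
        !![p, 0, (v + z) / 2 + p * y 1;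
           0, p, (g + h) / 2 - p * y 0;
           (v + z) / 2 + p * y 1, (g + h) / 2 - p * y 0,
             r - (g + h) * y 0 + (v + z) * y 1 + p * ((y 0) ^ 2 + (y 1) ^ 2)] := by
      ext i j
      simp only [Matrix.smul_apply, Matrix.add_apply, Matrix.transpose_apply, F701]
      fin_cases i <;> fin_cases j <;>
        simp [Matrix.cons_val_zero, Matrix.cons_val_one, Matrix.head_cons,
          Matrix.cons_val_fin_one, Matrix.head_fin_const] <;> ring
    rw [hG, Matrix.det_fin_three]
    simp [Matrix.cons_val_zero, Matrix.cons_val_one]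
    ring
  simp_rw [Matrix.isUnit_iff_isUnit_det, isUnit_iff_ne_zero, hdet]
  constructor
  · intro h hc
    exact h 0 (by rw [hc]; ring)
  · intro h y hc
    apply h
    linarith
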